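/- arXiv:1209.4337 — 6 statements merged into one kernel-verified Lean document; each statement's English description precedes it below -/
import Mathlib

section
/- For every ε > 0 and β > 0 there exist constants C > 0 and T₀ ∈ (0,1) such that for every 0 < T ≤ T₀ there is a measurable set Ω_T ⊆ Ω with P(Ω ∖ Ω_T) < exp(−1/T^β), and such that for every ω ∈ Ω_T and every integer n ≥ 1: |g_n(ω)| ≤ C T^{−β/2} (1 + n)^ε. -/
/-!
Each `h n`, `k n` has the law `N(0, 1/2)`, hence is sub-Gaussian with `P(a ≤ |h n|) ≤ 2 exp (-a²)`.
Put `u = T^(-β/2)` and use the thresholds `a_n = 2u (n + 1)^ε`. Since `x^s ≥ 1 + s log x`, as soon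
as `u² ≥ 1 + 1/(4ε)` we get `a_n² ≥ 4u² + 2 log (n + 1)`, so a union bound over all `n` gives a
bad event of mass at most `4 exp (-4u²) ∑ (n + 1)⁻² < exp (-u²) = exp (-1/T^β)`. Off that event,
`|g_n| ≤ |h_n| + |k_n| < 2 a_n`.
-/

open MeasureTheory ProbabilityTheory Real
open scoped NNReal ENNReal

lemma hasSum_one_div_add_two_sq :
    HasSum (fun j : ℕ ↦ 1 / ((j : ℝ) + 2) ^ 2) (π ^ 2 / 6 - 1) := by
  have h := (hasSum_nat_add_iff' 2).mpr hasSum_zeta_two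
  norm_num [Finset.sum_range_succ] at h
  simpa [one_div] using h

lemma tsum_one_div_add_two_sq_le_one : ∑' j : ℕ, 1 / ((j : ℝ) + 2) ^ 2 ≤ 1 := by
  rw [hasSum_one_div_add_two_sq.tsum_eq]
  nlinarith [pi_lt_d2, pi_pos]

lemma exp_neg_mul_rpow_le {c s x : ℝ} (hc : 0 ≤ c) (hcs : 2 ≤ c * s) (hx : 1 ≤ x) :
    exp (-(c * x ^ s)) ≤ exp (-c) * (1 / x ^ 2) := by
  have hlog : 0 ≤ log x := log_nonneg hx
  have hpow : 1 + s * log x ≤ x ^ s := by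
    rw [rpow_def_of_pos (by linarith)]
    linarith [add_one_le_exp (log x * s)]
  have hx2 : 1 / x ^ 2 = exp (-(2 * log x)) := by
    rw [exp_neg, ← log_rpow (by linarith), exp_log (by positivity)]
    norm_num
  rw [hx2, ← exp_add, exp_le_exp]
  nlinarith [mul_le_mul_of_nonneg_left hpow hc]

lemma tsum_ofReal_exp_neg_mul_rpow_le {c s : ℝ} (hc : 0 ≤ c) (hcs : 2 ≤ c * s) :
    ∑' j : ℕ, ENNReal.ofReal (exp (-(c * ((j : ℝ) + 2) ^ s))) ≤ ENNReal.ofReal (exp (-c)) :=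
  calc ∑' j : ℕ, ENNReal.ofReal (exp (-(c * ((j : ℝ) + 2) ^ s)))
      ≤ ∑' j : ℕ, ENNReal.ofReal (exp (-c) * (1 / ((j : ℝ) + 2) ^ 2)) :=
        ENNReal.tsum_le_tsum fun j ↦ ENNReal.ofReal_le_ofReal <|
          exp_neg_mul_rpow_le hc hcs (by linarith [j.cast_nonneg (α := ℝ)])
    _ = ENNReal.ofReal (exp (-c) * ∑' j : ℕ, 1 / ((j : ℝ) + 2) ^ 2) := by
        rw [← ENNReal.ofReal_tsum_of_nonneg (fun j ↦ by positivity)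
          (hasSum_one_div_add_two_sq.summable.mul_left _), tsum_mul_left]
    _ ≤ ENNReal.ofReal (exp (-c)) := ENNReal.ofReal_le_ofReal <|
        mul_le_of_le_one_right (exp_pos _).le tsum_one_div_add_two_sq_le_one

lemma four_mul_exp_neg_four_mul_lt {x : ℝ} (hx : 1 ≤ x) : 4 * exp (-(4 * x)) < exp (-x) :=
  calc 4 * exp (-(4 * x)) < exp (3 * x) * exp (-(4 * x)) := by
        gcongr; linarith [add_one_lt_exp (x := 3 * x) (by linarith)]
    _ = exp (-x) := by rw [← exp_add]; ring_nf

lemma Complex.norm_ofReal_add_ofReal_mul_I_le (x y : ℝ) : ‖(x : ℂ) + y * I‖ ≤ |x| + |y| := by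
  simpa using norm_le_abs_re_add_abs_im (x + y * I)

section

variable {Ω : Type*} [MeasurableSpace Ω] {P : Measure Ω}

namespace ProbabilityTheory

variable {X : Ω → ℝ}

lemma hasSubgaussianMGF_of_map_eq_gaussianReal {v : ℝ≥0} (hX : AEMeasurable X P)
    (hmap : P.map X = gaussianReal 0 v) : HasSubgaussianMGF X v P := by
  rw [← HasSubgaussianMGF.id_map_iff hX, hmap]
  exact ⟨integrable_exp_mul_gaussianReal, fun t ↦ by simp [mgf_id_gaussianReal]⟩

lemma HasSubgaussianMGF.measure_le_abs_le [IsFiniteMeasure P] {c : ℝ≥0}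
    (h : HasSubgaussianMGF X c P) {a : ℝ} (ha : 0 ≤ a) :
    P {ω | a ≤ |X ω|} ≤ 2 * ENNReal.ofReal (exp (-a ^ 2 / (2 * c))) := by
  have hsplit : {ω | a ≤ |X ω|} ⊆ {ω | a ≤ X ω} ∪ {ω | a ≤ (-X) ω} := fun ω hω ↦ by
    simpa [le_abs] using hω
  have hright : ∀ {Y : Ω → ℝ}, HasSubgaussianMGF Y c P →
      P {ω | a ≤ Y ω} ≤ ENNReal.ofReal (exp (-a ^ 2 / (2 * c))) := fun hY ↦ by
    rw [← ofReal_measureReal]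
    exact ENNReal.ofReal_le_ofReal (hY.measure_ge_le ha)
  calc P {ω | a ≤ |X ω|} ≤ P {ω | a ≤ X ω} + P {ω | a ≤ (-X) ω} :=
        (measure_mono hsplit).trans (measure_union_le _ _)
    _ ≤ 2 * ENNReal.ofReal (exp (-a ^ 2 / (2 * c))) := by
        rw [two_mul]; exact add_le_add (hright h) (hright h.neg)

lemma measure_iUnion_le_abs_le [IsFiniteMeasure P] {ι : Type*} [Countable ι] {c : ℝ≥0}
    {X : ι → Ω → ℝ} (hX : ∀ i, HasSubgaussianMGF (X i) c P) {a : ι → ℝ} (ha : ∀ i, 0 ≤ a i) :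
    P (⋃ i, {ω | a i ≤ |X i ω|}) ≤ 2 * ∑' i, ENNReal.ofReal (exp (-a i ^ 2 / (2 * c))) :=
  (measure_iUnion_le _).trans <| (ENNReal.tsum_le_tsum fun i ↦
    (hX i).measure_le_abs_le (ha i)).trans_eq ENNReal.tsum_mul_left

end ProbabilityTheory

lemma measure_iUnion_le_abs_gaussianReal_le [IsFiniteMeasure P] {X : ℕ → Ω → ℝ}
    (hX : ∀ j, AEMeasurable (X j) P) (hmap : ∀ j, P.map (X j) = gaussianReal 0 (1 / 2))
    {u ε : ℝ} (hu : 0 ≤ u) (huε : 1 ≤ 4 * u ^ 2 * ε) :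
    P (⋃ j : ℕ, {ω | 2 * u * ((j : ℝ) + 2) ^ ε ≤ |X j ω|}) ≤
      2 * ENNReal.ofReal (exp (-(4 * u ^ 2))) := by
  have hsq : ∀ j : ℕ, (2 * u * ((j : ℝ) + 2) ^ ε) ^ 2 = 4 * u ^ 2 * ((j : ℝ) + 2) ^ (2 * ε) :=
    fun j ↦ by rw [mul_comm 2 ε, rpow_mul (by positivity), rpow_two]; ring
  calc P (⋃ j : ℕ, {ω | 2 * u * ((j : ℝ) + 2) ^ ε ≤ |X j ω|})
      ≤ 2 * ∑' j : ℕ, ENNReal.ofReal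
          (exp (-(2 * u * ((j : ℝ) + 2) ^ ε) ^ 2 / (2 * ((1 / 2 : ℝ≥0) : ℝ)))) :=
        measure_iUnion_le_abs_le
          (fun j ↦ hasSubgaussianMGF_of_map_eq_gaussianReal (hX j) (hmap j))
          (fun j ↦ by positivity)
    _ = 2 * ∑' j : ℕ, ENNReal.ofReal (exp (-(4 * u ^ 2 * ((j : ℝ) + 2) ^ (2 * ε)))) := by
        simp_rw [hsq]; norm_num
    _ ≤ 2 * ENNReal.ofReal (exp (-(4 * u ^ 2))) := by
        gcongr
        exact tsum_ofReal_exp_neg_mul_rpow_le (by positivity) (by linarith)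

lemma exists_measurableSet_measure_compl_lt_and_norm_le [IsFiniteMeasure P]
    {X Y : ℕ → Ω → ℝ} (hX : ∀ j, Measurable (X j)) (hY : ∀ j, Measurable (Y j))
    (hXmap : ∀ j, P.map (X j) = gaussianReal 0 (1 / 2))
    (hYmap : ∀ j, P.map (Y j) = gaussianReal 0 (1 / 2)) {u ε : ℝ} (hu : 0 ≤ u)
    (hu_sq : 1 ≤ u ^ 2) (huε : 1 ≤ 4 * u ^ 2 * ε) :
    ∃ G : Set Ω, MeasurableSet G ∧ P Gᶜ < ENNReal.ofReal (exp (-u ^ 2)) ∧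
      ∀ ω ∈ G, ∀ j : ℕ, ‖(X j ω : ℂ) + Y j ω * Complex.I‖ ≤ 4 * u * ((j : ℝ) + 2) ^ ε := by
  set a : ℕ → ℝ := fun j ↦ 2 * u * ((j : ℝ) + 2) ^ ε
  refine ⟨((⋃ j, {ω | a j ≤ |X j ω|}) ∪ ⋃ j, {ω | a j ≤ |Y j ω|})ᶜ, ?_, ?_, ?_⟩
  · exact ((MeasurableSet.iUnion fun j ↦ measurableSet_le measurable_const (hX j).abs).union
      (MeasurableSet.iUnion fun j ↦ measurableSet_le measurable_const (hY j).abs)).compl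
  · rw [compl_compl]
    calc _ ≤ 2 * ENNReal.ofReal (exp (-(4 * u ^ 2))) + 2 * ENNReal.ofReal (exp (-(4 * u ^ 2))) :=
          (measure_union_le _ _).trans <| add_le_add
            (measure_iUnion_le_abs_gaussianReal_le (fun j ↦ (hX j).aemeasurable) hXmap hu huε)
            (measure_iUnion_le_abs_gaussianReal_le (fun j ↦ (hY j).aemeasurable) hYmap hu huε)
      _ = ENNReal.ofReal (4 * exp (-(4 * u ^ 2))) := by
          rw [← add_mul, ENNReal.ofReal_mul (by norm_num)]; norm_num
      _ < _ := (ENNReal.ofReal_lt_ofReal_iff (exp_pos _)).2 (four_mul_exp_neg_four_mul_lt hu_sq)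
  · intro ω hω j
    simp only [Set.mem_compl_iff, Set.mem_union, Set.mem_iUnion, Set.mem_ofPred_eq, not_or,
      not_exists, not_le] at hω
    calc _ ≤ |X j ω| + |Y j ω| := Complex.norm_ofReal_add_ofReal_mul_I_le _ _
      _ ≤ 2 * a j := by linarith [hω.1 j, hω.2 j]
      _ = _ := by ring

end

theorem coefficient_bound_large_deviation_general
    {Ω : Type*} [MeasurableSpace Ω] (P : Measure Ω) [IsProbabilityMeasure P]
    (h k : ℕ → Ω → ℝ)
    (hmeas : ∀ n : ℕ, 1 ≤ n → Measurable (h n) ∧ Measurable (k n))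
    (hgauss : ∀ n : ℕ, 1 ≤ n →
      Measure.map (h n) P = gaussianReal 0 (1 / 2) ∧
        Measure.map (k n) P = gaussianReal 0 (1 / 2))
    (ε β : ℝ) (hε : 0 < ε) (hβ : 0 < β) :
    ∃ C > 0, ∃ T₀ : ℝ, 0 < T₀ ∧ T₀ < 1 ∧
      ∀ T : ℝ, 0 < T → T ≤ T₀ →
        ∃ ΩT : Set Ω, MeasurableSet ΩT ∧
          P ΩTᶜ < ENNReal.ofReal (Real.exp (-1 / T ^ β)) ∧
          ∀ ω ∈ ΩT, ∀ n : ℕ, 1 ≤ n →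
            ‖(h n ω : ℂ) + (k n ω : ℂ) * Complex.I‖ ≤
              C * T ^ (-(β / 2)) * (1 + (n : ℝ)) ^ ε := by
  set K := 1 + 1 / (4 * ε)
  have hK : 1 < K := lt_add_of_pos_right _ (by positivity)
  refine ⟨4, four_pos, K ^ (-β)⁻¹, by positivity,
    rpow_lt_one_of_one_lt_of_neg hK (by simpa using hβ), fun T hT hTT₀ ↦ ?_⟩
  set u := T ^ (-(β / 2))
  have hu_sq : u ^ 2 = T ^ (-β) := by rw [← rpow_natCast, ← rpow_mul hT.le]; ring_nf
  have hKu : K ≤ u ^ 2 := hu_sq ▸ (le_rpow_inv_iff_of_neg hT (by linarith) (by linarith)).1 hTT₀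
  have huε : 1 ≤ 4 * u ^ 2 * ε := by
    have : 1 / (4 * ε) * (4 * ε) = 1 := by field_simp
    nlinarith
  obtain ⟨G, hG_meas, hG_compl, hG_norm⟩ :=
    exists_measurableSet_measure_compl_lt_and_norm_le (X := fun j ↦ h (j + 1))
      (Y := fun j ↦ k (j + 1)) (fun j ↦ (hmeas _ j.succ_pos).1) (fun j ↦ (hmeas _ j.succ_pos).2)
      (fun j ↦ (hgauss _ j.succ_pos).1) (fun j ↦ (hgauss _ j.succ_pos).2) (by positivity)
      (by linarith) huε
  refine ⟨G, hG_meas, by rwa [neg_div, one_div, ← rpow_neg hT.le, ← hu_sq], ?_⟩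
  intro ω hω n hn
  obtain ⟨j, rfl⟩ := Nat.exists_eq_add_of_le' hn
  convert hG_norm ω hω j using 3
  push_cast; ring

/-- **Uniform bound on randomized Fourier coefficients (Lemma: large deviations).**
Let `(g_n)_{n ≥ 1}` with `g_n = h_n + i k_n` be independent standard complex Gaussian random
variables ( `(h_n)`, `(k_n)` mutually independent real Gaussians of mean `0`, variance `1/2`).
For every `ε > 0` and `β > 0` there are `C > 0` and `T₀ ∈ (0,1)` such that for every
`0 < T ≤ T₀` there is a measurable set `Ω_T` with `P(Ω_Tᶜ) < exp(-1/T^β)` and, for all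
`ω ∈ Ω_T` and all `n ≥ 1`, `|g_n(ω)| ≤ C T^{-β/2} (1+n)^ε`. -/
theorem coefficient_bound_large_deviation
    {Ω : Type*} [MeasurableSpace Ω] (P : Measure Ω) [IsProbabilityMeasure P]
    (h k : ℕ → Ω → ℝ)
    (hmeas : ∀ n : ℕ, 1 ≤ n → Measurable (h n) ∧ Measurable (k n))
    (hindep : iIndepFun
      (Sum.elim (fun j : {n : ℕ // 1 ≤ n} => h (j : ℕ))
        (fun j : {n : ℕ // 1 ≤ n} => k (j : ℕ))) P)
    (hgauss : ∀ n : ℕ, 1 ≤ n →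
      Measure.map (h n) P = gaussianReal 0 (1 / 2) ∧
        Measure.map (k n) P = gaussianReal 0 (1 / 2))
    (ε β : ℝ) (hε : 0 < ε) (hβ : 0 < β) :
    ∃ C > 0, ∃ T₀ : ℝ, 0 < T₀ ∧ T₀ < 1 ∧
      ∀ T : ℝ, 0 < T → T ≤ T₀ →
        ∃ ΩT : Set Ω, MeasurableSet ΩT ∧
          P ΩTᶜ < ENNReal.ofReal (Real.exp (-1 / T ^ β)) ∧
          ∀ ω ∈ ΩT, ∀ n : ℕ, 1 ≤ n →
            ‖(h n ω : ℂ) + (k n ω : ℂ) * Complex.I‖ ≤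
              C * T ^ (-(β / 2)) * (1 + (n : ℝ)) ^ ε :=
  coefficient_bound_large_deviation_general P h k hmeas hgauss ε β hε hβ
end

section
/- Let u : ℝ × ℝ → ℝ be a C^∞ function, 2π-periodic in its first argument, and suppose that for all (x,t): ∂_t u(x,t) + ∂_x³ u(x,t) = ( u(x,t)³ − (1/2π) ∫₀^{2π} u(y,t)³ dy ) · ∂_x u(x,t). Then the function t ↦ (1/2) ∫₀^{2π} (∂_x u(x,t))² dx + (1/20) ∫₀^{2π} u(x,t)⁵ dx is constant on ℝ. -/
/-!
Along the flow, `dH/dt = ∫ (uₓ ∂ₜuₓ + u⁴/4 · uₜ) dx`. The equation says `uₜ = ∂ₓE` with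
`E = -uₓₓ + u⁴/4 - c u`, where `c(t)` is the mean of `u³` and `E + c u` is the variational
derivative of `H`. Hence, using `∂ₜuₓ = ∂ₓuₜ`, the integrand is the `x`-derivative of
`uₓ uₜ + E²/2 + c u E + c (uₓ²/2 - u⁵/20 + c u²/2)`, a periodic function, and its integral over
a period vanishes. Differentiating under the integral sign only needs the partial derivatives of
the smooth solution to be bounded on compact sets.
-/

open Function
open scoped ContDiff

noncomputable def partialX (f : ℝ → ℝ → ℝ) (x t : ℝ) : ℝ := deriv (fun y => f y t) x

noncomputable def partialT (f : ℝ → ℝ → ℝ) (x t : ℝ) : ℝ := deriv (fun s => f x s) t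

section PartialDerivatives

theorem DifferentiableAt.hasDerivAt_comp_prodMk_left {G : ℝ × ℝ → ℝ} {x t : ℝ}
    (hG : DifferentiableAt ℝ G (x, t)) :
    HasDerivAt (fun y => G (y, t)) (fderiv ℝ G (x, t) (1, 0)) x :=
  hG.hasFDerivAt.comp_hasDerivAt x ((hasDerivAt_id x).prodMk (hasDerivAt_const x t))

theorem DifferentiableAt.hasDerivAt_comp_prodMk_right {G : ℝ × ℝ → ℝ} {x t : ℝ}
    (hG : DifferentiableAt ℝ G (x, t)) :
    HasDerivAt (fun s => G (x, s)) (fderiv ℝ G (x, t) (0, 1)) t :=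
  hG.hasFDerivAt.comp_hasDerivAt t ((hasDerivAt_const t x).prodMk (hasDerivAt_id t))

variable {f : ℝ → ℝ → ℝ}

theorem partialX_eq_fderiv {x t : ℝ} (hf : DifferentiableAt ℝ (uncurry f) (x, t)) :
    partialX f x t = fderiv ℝ (uncurry f) (x, t) (1, 0) :=
  hf.hasDerivAt_comp_prodMk_left.deriv

theorem partialT_eq_fderiv {x t : ℝ} (hf : DifferentiableAt ℝ (uncurry f) (x, t)) :
    partialT f x t = fderiv ℝ (uncurry f) (x, t) (0, 1) :=
  hf.hasDerivAt_comp_prodMk_right.deriv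

theorem hasDerivAt_partialT {x t : ℝ} (hf : DifferentiableAt ℝ (uncurry f) (x, t)) :
    HasDerivAt (fun s => f x s) (partialT f x t) t := by
  rw [partialT_eq_fderiv hf]
  exact hf.hasDerivAt_comp_prodMk_right

theorem ContDiff.uncurry_partialX (hf : ContDiff ℝ ∞ (uncurry f)) :
    ContDiff ℝ ∞ (uncurry (partialX f)) := by
  have h : uncurry (partialX f) = fun p => fderiv ℝ (uncurry f) p (1, 0) :=
    funext fun p => partialX_eq_fderiv (hf.differentiable (by simp) p)
  rw [h]
  exact (hf.fderiv_right (by simp)).clm_apply contDiff_const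

theorem ContDiff.uncurry_partialT (hf : ContDiff ℝ ∞ (uncurry f)) :
    ContDiff ℝ ∞ (uncurry (partialT f)) := by
  have h : uncurry (partialT f) = fun p => fderiv ℝ (uncurry f) p (0, 1) :=
    funext fun p => partialT_eq_fderiv (hf.differentiable (by simp) p)
  rw [h]
  exact (hf.fderiv_right (by simp)).clm_apply contDiff_const

theorem partialT_partialX (hf : ContDiff ℝ 2 (uncurry f)) :
    partialT (partialX f) = partialX (partialT f) := by
  have hdf : Differentiable ℝ (uncurry f) := hf.differentiable (by simp)
  have hd2 : Differentiable ℝ (fderiv ℝ (uncurry f)) :=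
    (hf.fderiv_right (m := 1) (by norm_num)).differentiable (by simp)
  have hsecond : ∀ v w p, fderiv ℝ (fun q => fderiv ℝ (uncurry f) q v) p w =
      fderiv ℝ (fderiv ℝ (uncurry f)) p w v :=
    fun v w p => by simp [fderiv_clm_apply (hd2 p) (differentiableAt_const v)]
  funext x t
  have hX := (hd2.clm_apply (differentiable_const (1, 0)) (x, t)).hasDerivAt_comp_prodMk_right
  have hT := (hd2.clm_apply (differentiable_const (0, 1)) (x, t)).hasDerivAt_comp_prodMk_left
  simp only [partialT, fun s => partialX_eq_fderiv (hdf (x, s)), hX.deriv]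
  simp only [partialX, fun y => partialT_eq_fderiv (hdf (y, t)), hT.deriv, hsecond]
  exact hf.contDiffAt.isSymmSndFDerivAt (by simp) _ _

end PartialDerivatives

theorem hasDerivAt_intervalIntegral_of_continuous_deriv {F F' : ℝ → ℝ → ℝ} {a b : ℝ}
    (hF : ∀ t, Continuous fun x => F x t) (hF' : Continuous (uncurry F'))
    (hderiv : ∀ x t, HasDerivAt (fun s => F x s) (F' x t) t) (t₀ : ℝ) :
    HasDerivAt (fun t => ∫ x in a..b, F x t) (∫ x in a..b, F' x t₀) t₀ := by
  obtain ⟨C, hC⟩ := (isCompact_uIcc.prod (isCompact_closedBall t₀ 1)).exists_bound_of_continuousOn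
    hF'.continuousOn
  have hF'_slice : Continuous fun x => F' x t₀ := hF'.comp (Continuous.prodMk_left t₀)
  refine (intervalIntegral.hasDerivAt_integral_of_dominated_loc_of_deriv_le
    (F := fun t x => F x t) (F' := fun t x => F' x t) (bound := fun _ => C)
    (Metric.ball_mem_nhds t₀ one_pos) (.of_forall fun t => (hF t).aestronglyMeasurable)
    ((hF t₀).intervalIntegrable a b) hF'_slice.aestronglyMeasurable ?_ intervalIntegrable_const
    (.of_forall fun x _ t _ => hderiv x t)).2
  exact .of_forall fun x hx t ht =>
    hC (x, t) ⟨Set.uIoc_subset_uIcc hx, Metric.ball_subset_closedBall ht⟩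

theorem Function.Periodic.iteratedDeriv {g : ℝ → ℝ} {T : ℝ} (hg : Periodic g T) (k : ℕ) :
    Periodic (iteratedDeriv k g) T := fun x => by
  rw [← congrFun (iteratedDeriv_comp_add_const k g T) x]
  exact congrArg (fun h => _root_.iteratedDeriv k h x) (funext hg)

noncomputable def gaugedGKdVField (c : ℝ) (g : ℝ → ℝ) (x : ℝ) : ℝ :=
  -iteratedDeriv 3 g x + (g x ^ 3 - c) * deriv g x

theorem integral_variation_gaugedGKdVField_eq_zero {g : ℝ → ℝ} {T : ℝ} (hg : ContDiff ℝ 4 g)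
    (hper : Periodic g T) (c : ℝ) :
    ∫ x in (0)..T, deriv g x * deriv (gaugedGKdVField c g) x +
      g x ^ 4 / 4 * gaugedGKdVField c g x = 0 := by
  set v := gaugedGKdVField c g
  have hD : ∀ k < 4, ∀ x, HasDerivAt (iteratedDeriv k g) (iteratedDeriv (k + 1) g x) x :=
    fun k hk x => by
      rw [iteratedDeriv_succ]
      exact (hg.differentiable_iteratedDeriv k (by exact_mod_cast hk) x).hasDerivAt
  have h0 : ∀ x, HasDerivAt g (deriv g x) x := fun x => by simpa using hD 0 (by norm_num) x
  have h1 : ∀ x, HasDerivAt (deriv g) (iteratedDeriv 2 g x) x := fun x => by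
    simpa using hD 1 (by norm_num) x
  have hv : ContDiff ℝ 1 v := by
    have h3 : ContDiff ℝ 1 (iteratedDeriv 3 g) := by
      rw [iteratedDeriv_eq_iterate]
      exact hg.iterate_deriv' 1 3
    have h1 : ContDiff ℝ 1 (deriv g) := by
      rw [← iteratedDeriv_one, iteratedDeriv_eq_iterate]
      exact (hg.of_le (by norm_num)).iterate_deriv' 1 1
    exact h3.neg.add ((((hg.of_le (by norm_num)).pow 3).sub contDiff_const).mul h1)
  set E : ℝ → ℝ := fun x => -iteratedDeriv 2 g x + g x ^ 4 / 4 - c * g x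
  have hE : ∀ x, HasDerivAt E (v x) x := fun x => by
    refine (((hD 2 (by norm_num) x).neg.add (((h0 x).pow 4).div_const 4)).sub
      ((h0 x).const_mul c)).congr_deriv ?_
    simp only [v, gaugedGKdVField]
    push_cast
    ring
  set F : ℝ → ℝ := fun x =>
    deriv g x * v x + E x ^ 2 / 2 + c * g x * E x +
      c * (deriv g x ^ 2 / 2 - g x ^ 5 / 20 + c * g x ^ 2 / 2)
  have hF : ∀ x, HasDerivAt F (deriv g x * deriv v x + g x ^ 4 / 4 * v x) x := fun x => by
    have hv' : HasDerivAt v (deriv v x) x := (hv.differentiable one_ne_zero x).hasDerivAt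
    refine ((((h1 x).mul hv').add (((hE x).pow 2).div_const 2)).add
      (((h0 x).const_mul c).mul (hE x))).add
      (((((h1 x).pow 2).div_const 2).sub (((h0 x).pow 5).div_const 20)).add
        ((((h0 x).pow 2).const_mul c).div_const 2) |>.const_mul c) |>.congr_deriv ?_
    simp only [E]
    push_cast
    ring
  have hFper : F T = F 0 := by
    have hP : ∀ k, iteratedDeriv k g T = iteratedDeriv k g 0 := fun k => by
      simpa using hper.iteratedDeriv k 0
    have hP0 : g T = g 0 := by simpa using hP 0
    have hP1 : deriv g T = deriv g 0 := by simpa using hP 1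
    simp only [F, E, v, gaugedGKdVField, hP0, hP1, hP 2, hP 3]
  have hcont : Continuous fun x => deriv g x * deriv v x + g x ^ 4 / 4 * v x := by
    have := hv.continuous_deriv le_rfl
    have := hv.continuous
    have := hg.continuous
    have := hg.continuous_deriv (by norm_num)
    fun_prop
  rw [intervalIntegral.integral_eq_sub_of_hasDerivAt (fun x _ => hF x)
    (hcont.intervalIntegrable 0 T), hFper, sub_self]

noncomputable def gkdvHamiltonian (T : ℝ) (u : ℝ → ℝ → ℝ) (t : ℝ) : ℝ :=
  (1 / 2) * (∫ x in (0)..T, partialX u x t ^ 2) + (1 / 20) * (∫ x in (0)..T, u x t ^ 5)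

theorem hasDerivAt_gkdvHamiltonian {u : ℝ → ℝ → ℝ} {T : ℝ} {c : ℝ → ℝ}
    (hu : ContDiff ℝ ∞ (uncurry u)) (hper : ∀ x t, u (x + T) t = u x t)
    (hPDE : ∀ x t, partialT u x t = gaugedGKdVField (c t) (fun y => u y t) x) (t : ℝ) :
    HasDerivAt (gkdvHamiltonian T u) 0 t := by
  have hux := hu.uncurry_partialX
  have hut := hu.uncurry_partialT
  have huxt := hux.uncurry_partialT
  have hslice : ∀ {f : ℝ → ℝ → ℝ}, ContDiff ℝ ∞ (uncurry f) → ∀ t, ContDiff ℝ ∞ fun x => f x t :=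
    fun hf t => hf.comp (contDiff_id.prodMk contDiff_const)
  have hF : ∀ t, Continuous fun x => (1 / 2) * partialX u x t ^ 2 + (1 / 20) * u x t ^ 5 :=
    fun t => (continuous_const.mul ((hslice hux t).continuous.pow 2)).add
      (continuous_const.mul ((hslice hu t).continuous.pow 5))
  have hF' : Continuous (uncurry fun x t =>
      partialX u x t * partialT (partialX u) x t + u x t ^ 4 / 4 * partialT u x t) :=
    (hux.continuous.mul huxt.continuous).add
      (((hu.continuous.pow 4).div_const 4).mul hut.continuous)
  have hdensity : ∀ x t, HasDerivAt (fun s => (1 / 2) * partialX u x s ^ 2 + (1 / 20) * u x s ^ 5)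
      (partialX u x t * partialT (partialX u) x t + u x t ^ 4 / 4 * partialT u x t) t :=
    fun x t => by
      refine ((((hasDerivAt_partialT (hux.differentiable (by simp) _)).pow 2).const_mul _).add
        (((hasDerivAt_partialT (hu.differentiable (by simp) _)).pow 5).const_mul _)).congr_deriv ?_
      push_cast
      ring
  have hH : gkdvHamiltonian T u =
      fun t => ∫ x in (0)..T, (1 / 2) * partialX u x t ^ 2 + (1 / 20) * u x t ^ 5 := by
    funext t
    rw [intervalIntegral.integral_add, intervalIntegral.integral_const_mul,
      intervalIntegral.integral_const_mul]
    · rfl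
    · exact (continuous_const.mul ((hslice hux t).continuous.pow 2)).intervalIntegrable _ _
    · exact (continuous_const.mul ((hslice hu t).continuous.pow 5)).intervalIntegrable _ _
  have hflux : ∫ x in (0)..T,
      partialX u x t * partialT (partialX u) x t + u x t ^ 4 / 4 * partialT u x t = 0 := by
    rw [partialT_partialX (hu.of_le (WithTop.coe_le_coe.mpr le_top))]
    simp only [partialX, hPDE]
    exact integral_variation_gaugedGKdVField_eq_zero
      ((hslice hu t).of_le (WithTop.coe_le_coe.mpr le_top)) (fun x => hper x t) (c t)
  rw [hH]
  simpa only [hflux] using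
    hasDerivAt_intervalIntegral_of_continuous_deriv (a := 0) (b := T) hF hF' hdensity t

/-- **Conservation of the Hamiltonian for the gauge-transformed quartic gKdV.**
Let `u : ℝ × ℝ → ℝ` be `C^∞`, `2π`-periodic in its first argument, and solve
`∂ₜ u + ∂ₓ³ u = (u³ - (1/2π)∫₀^{2π} u³ dy) ∂ₓ u`.  Then
`t ↦ (1/2)∫₀^{2π} (∂ₓ u)² dx + (1/20)∫₀^{2π} u⁵ dx` is constant on `ℝ`. -/
theorem hamiltonian_conserved_gauged_gkdv (u : ℝ → ℝ → ℝ)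
    (hsmooth : ContDiff ℝ (⊤ : ℕ∞) (Function.uncurry u))
    (hper : ∀ x t : ℝ, u (x + 2 * Real.pi) t = u x t)
    (hPDE : ∀ x t : ℝ,
      deriv (fun s => u x s) t + iteratedDeriv 3 (fun y => u y t) x =
        (u x t ^ 3 - (1 / (2 * Real.pi)) * ∫ y in (0:ℝ)..(2 * Real.pi), u y t ^ 3) *
          deriv (fun y => u y t) x) :
    ∀ t₁ t₂ : ℝ,
      (1 / 2) * (∫ x in (0:ℝ)..(2 * Real.pi), (deriv (fun y => u y t₁) x) ^ 2) +
          (1 / 20) * (∫ x in (0:ℝ)..(2 * Real.pi), u x t₁ ^ 5) =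
        (1 / 2) * (∫ x in (0:ℝ)..(2 * Real.pi), (deriv (fun y => u y t₂) x) ^ 2) +
          (1 / 20) * (∫ x in (0:ℝ)..(2 * Real.pi), u x t₂ ^ 5) := by
  have hfield : ∀ x t, partialT u x t = gaugedGKdVField
      ((1 / (2 * Real.pi)) * ∫ y in (0:ℝ)..(2 * Real.pi), u y t ^ 3) (fun y => u y t) x :=
    fun x t => by
      rw [partialT, gaugedGKdVField]
      linarith [hPDE x t]
  have hH := hasDerivAt_gkdvHamiltonian hsmooth hper hfield
  exact is_const_of_deriv_eq_zero (fun t => (hH t).differentiableAt) (fun t => (hH t).deriv)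
end

section
/- The vector field of the truncated gauge-transformed quartic gKdV system is divergence-free: writing c_n = a_n + i b_n and viewing V := (Re F₁, …, Re F_N, Im F₁, …, Im F_N) as a map ℝ^{2N} → ℝ^{2N}, one has at every point of ℝ^{2N}: Σ_{n=1}^N ( ∂_{a_n} Re F_n + ∂_{b_n} Im F_n ) = 0; equivalently, the trace of the (Fréchet) derivative of V vanishes identically, so the flow of the system preserves Lebesgue measure. -/
/-- Extension of `c = (c₁, …, c_N) ∈ ℂ^N` to integer indices `m` with `0 < |m| ≤ N`,
using the reality convention `c₋ₘ = conj cₘ` (and taking the value `0` for other `m`). -/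
noncomputable def extendConj (N : ℕ) (c : Fin N → ℂ) (m : ℤ) : ℂ :=
  if h : 1 ≤ m ∧ m ≤ (N : ℤ) then c ⟨m.toNat - 1, by omega⟩
  else if h' : 1 ≤ -m ∧ -m ≤ (N : ℤ) then (starRingEnd ℂ) (c ⟨(-m).toNat - 1, by omega⟩)
  else 0

/-- The vector field of the truncated gauge-transformed quartic gKdV system:
`F_n(c) = -i n³ c_n - i Σ n₁ c_{n₁} c_{n₂} c_{n₃} c_{n₄}`, the sum over quadruples of
integers `(n₁, n₂, n₃, n₄)` with `0 < |n_j| ≤ N`, `n₁ + n₂ + n₃ + n₄ = n` and `n₁ ≠ n`.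
Here the index `n ∈ {1, …, N}` is represented by `n : Fin N` (so the frequency is `n + 1`). -/
noncomputable def gkdvF (N : ℕ) (c : Fin N → ℂ) (n : Fin N) : ℂ :=
  -Complex.I * (((n : ℕ) + 1 : ℤ) : ℂ) ^ 3 * c n -
    Complex.I *
      ∑ q ∈ (((Finset.Icc (-(N : ℤ)) (N : ℤ)).erase 0 ×ˢ
              (Finset.Icc (-(N : ℤ)) (N : ℤ)).erase 0 ×ˢ
              (Finset.Icc (-(N : ℤ)) (N : ℤ)).erase 0 ×ˢ
              (Finset.Icc (-(N : ℤ)) (N : ℤ)).erase 0).filter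
          (fun q : ℤ × ℤ × ℤ × ℤ =>
            q.1 + q.2.1 + q.2.2.1 + q.2.2.2 = ((n : ℕ) + 1 : ℤ) ∧
              q.1 ≠ ((n : ℕ) + 1 : ℤ))),
        (q.1 : ℂ) * extendConj N c q.1 * extendConj N c q.2.1 * extendConj N c q.2.2.1 *
          extendConj N c q.2.2.2

/-!
With `c_n = a_n + i b_n`, one has `∂_{a_n} Re F + ∂_{b_n} Im F = 2 Re (∂F/∂c_n)` for the Wirtinger
derivative, so the dependence of `F_n` on `conj c_n = c_{-n}` drops out. The linear part gives
`2 Re (-i n³) = 0`. In the quartic sum the slot `n₁` never equals `n`, so `∂/∂c_n` hits one of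
the other three slots and yields `3 Σ n₁ c_{n₁} c_{n₂} c_{n₃}` over `n₁ + n₂ + n₃ = 0`, `n₁ ≠ n`.
The full cubic sum over `n₁ + n₂ + n₃ = 0` vanishes (symmetrise `n₁` into `(n₁ + n₂ + n₃) / 3`),
so this is `-3 T_n`, `T_n` being its part with `n₁ = n`, and the `n`-th term of the divergence is
`-6 Im T_n`. Finally `Σ_n T_n` is the cubic sum over `n₁ > 0`; the substitution `m ↦ -m` together
with `c_{-m} = conj c_m` turns it into minus the conjugate of the part `n₁ < 0`, and since the
two parts add up to `0`, `Σ_n T_n` is real.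
-/

open Complex ComplexConjugate Finset

/-- `P` and `Q` are the partial derivatives `∂ₓg`, `∂_y g` at `z`, taken along the two coordinate
lines through `z`, and `A = (∂ₓg - i ∂_y g) / 2` is the Wirtinger derivative `∂g/∂z`. -/
def HasWirtingerDerivAt (g : ℂ → ℂ) (A z : ℂ) : Prop :=
  ∃ P Q : ℂ, HasDerivAt (fun s : ℝ => g (s + z.im * I)) P z.re ∧
    HasDerivAt (fun t : ℝ => g (z.re + t * I)) Q z.im ∧ P - I * Q = 2 * A

section Wirtinger

variable {f g : ℂ → ℂ} {A B z : ℂ}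

theorem HasWirtingerDerivAt.congr_deriv (h : HasWirtingerDerivAt f A z) (hAB : A = B) :
    HasWirtingerDerivAt f B z :=
  hAB ▸ h

theorem hasWirtingerDerivAt_const (a z : ℂ) : HasWirtingerDerivAt (fun _ => a) 0 z :=
  ⟨0, 0, hasDerivAt_const _ _, hasDerivAt_const _ _, by ring⟩

theorem hasDerivAt_ofReal_add_const (x : ℝ) (w : ℂ) :
    HasDerivAt (fun s : ℝ => (s : ℂ) + w) 1 x := by
  simpa using (hasDerivAt_id x).ofReal_comp.add_const w

theorem hasDerivAt_const_add_ofReal_mul_I (x : ℝ) (w : ℂ) :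
    HasDerivAt (fun t : ℝ => w + t * I) I x := by
  simpa using ((hasDerivAt_id x).ofReal_comp.mul_const I).const_add w

theorem hasWirtingerDerivAt_id (z : ℂ) : HasWirtingerDerivAt (fun v => v) 1 z :=
  ⟨1, I, hasDerivAt_ofReal_add_const _ _, hasDerivAt_const_add_ofReal_mul_I _ _, by
    linear_combination -I_mul_I⟩

theorem hasWirtingerDerivAt_conj (z : ℂ) : HasWirtingerDerivAt (starRingEnd ℂ) 0 z := by
  refine ⟨1, -I, ?_, ?_, by linear_combination I_mul_I⟩
  · exact (conjCLE.hasFDerivAt.comp_hasDerivAt _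
      (hasDerivAt_ofReal_add_const z.re (z.im * I))).congr_deriv (by simp)
  · exact (conjCLE.hasFDerivAt.comp_hasDerivAt _
      (hasDerivAt_const_add_ofReal_mul_I z.im z.re)).congr_deriv (by simp)

theorem HasWirtingerDerivAt.add (hf : HasWirtingerDerivAt f A z) (hg : HasWirtingerDerivAt g B z) :
    HasWirtingerDerivAt (fun v => f v + g v) (A + B) z := by
  obtain ⟨P, Q, hP, hQ, hA⟩ := hf
  obtain ⟨P', Q', hP', hQ', hB⟩ := hg
  exact ⟨P + P', Q + Q', hP.add hP', hQ.add hQ', by linear_combination hA + hB⟩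

theorem HasWirtingerDerivAt.sub (hf : HasWirtingerDerivAt f A z) (hg : HasWirtingerDerivAt g B z) :
    HasWirtingerDerivAt (fun v => f v - g v) (A - B) z := by
  obtain ⟨P, Q, hP, hQ, hA⟩ := hf
  obtain ⟨P', Q', hP', hQ', hB⟩ := hg
  exact ⟨P - P', Q - Q', hP.sub hP', hQ.sub hQ', by linear_combination hA - hB⟩

theorem HasWirtingerDerivAt.mul (hf : HasWirtingerDerivAt f A z) (hg : HasWirtingerDerivAt g B z) :
    HasWirtingerDerivAt (fun v => f v * g v) (A * g z + f z * B) z := by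
  obtain ⟨P, Q, hP, hQ, hA⟩ := hf
  obtain ⟨P', Q', hP', hQ', hB⟩ := hg
  have hz : (z.re : ℂ) + z.im * I = z := re_add_im z
  refine ⟨P * g z + f z * P', Q * g z + f z * Q', ?_, ?_, by linear_combination g z * hA + f z * hB⟩
  · simpa only [hz] using hP.fun_mul hP'
  · simpa only [hz] using hQ.fun_mul hQ'

theorem HasWirtingerDerivAt.const_mul (a : ℂ) (hf : HasWirtingerDerivAt f A z) :
    HasWirtingerDerivAt (fun v => a * f v) (a * A) z :=
  ((hasWirtingerDerivAt_const a z).mul hf).congr_deriv (by ring)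

theorem HasWirtingerDerivAt.sum {ι : Type*} {s : Finset ι} {f : ι → ℂ → ℂ} {A : ι → ℂ}
    (h : ∀ i ∈ s, HasWirtingerDerivAt (f i) (A i) z) :
    HasWirtingerDerivAt (fun v => ∑ i ∈ s, f i v) (∑ i ∈ s, A i) z := by
  classical
  induction s using Finset.induction_on with
  | empty => simpa using hasWirtingerDerivAt_const 0 z
  | insert i s hi ih =>
    simp only [sum_insert hi]
    exact (h i (mem_insert_self i s)).add (ih fun j hj => h j (mem_insert_of_mem hj))

theorem HasWirtingerDerivAt.deriv_re_add_deriv_im (h : HasWirtingerDerivAt g A z) :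
    deriv (fun s : ℝ => (g (s + z.im * I)).re) z.re +
      deriv (fun t : ℝ => (g (z.re + t * I)).im) z.im = 2 * A.re := by
  obtain ⟨P, Q, hP, hQ, hA⟩ := h
  have hP' : HasDerivAt (fun s : ℝ => (g (s + z.im * I)).re) P.re z.re :=
    reCLM.hasFDerivAt.comp_hasDerivAt _ hP
  have hQ' : HasDerivAt (fun t : ℝ => (g (z.re + t * I)).im) Q.im z.im :=
    imCLM.hasFDerivAt.comp_hasDerivAt _ hQ
  rw [hP'.deriv, hQ'.deriv]
  simpa using congrArg re hA

end Wirtinger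

section Resonance

variable (S : Finset ℤ)

def zeroSumTriples : Finset (ℤ × ℤ × ℤ) :=
  (S ×ˢ S ×ˢ S).filter fun t => t.1 + t.2.1 + t.2.2 = 0

def quartets (ν : ℤ) : Finset (ℤ × ℤ × ℤ × ℤ) :=
  (S ×ˢ S ×ˢ S ×ˢ S).filter fun q => q.1 + q.2.1 + q.2.2.1 + q.2.2.2 = ν ∧ q.1 ≠ ν

variable {S}

theorem mem_zeroSumTriples {t : ℤ × ℤ × ℤ} :
    t ∈ zeroSumTriples S ↔ t.1 ∈ S ∧ t.2.1 ∈ S ∧ t.2.2 ∈ S ∧ t.1 + t.2.1 + t.2.2 = 0 := by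
  simp [zeroSumTriples, and_assoc]

theorem mem_quartets {ν : ℤ} {q : ℤ × ℤ × ℤ × ℤ} :
    q ∈ quartets S ν ↔ q.1 ∈ S ∧ q.2.1 ∈ S ∧ q.2.2.1 ∈ S ∧ q.2.2.2 ∈ S ∧
      q.1 + q.2.1 + q.2.2.1 + q.2.2.2 = ν ∧ q.1 ≠ ν := by
  simp [quartets, and_assoc]

def cubicTerm (e : ℤ → ℂ) (t : ℤ × ℤ × ℤ) : ℂ := t.1 * e t.1 * e t.2.1 * e t.2.2

theorem sum_cubicTerm_zeroSumTriples (e : ℤ → ℂ) :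
    ∑ t ∈ zeroSumTriples S, cubicTerm e t = 0 := by
  have h₂ : ∑ t ∈ zeroSumTriples S, cubicTerm e t =
      ∑ t ∈ zeroSumTriples S, t.2.1 * e t.1 * e t.2.1 * e t.2.2 := by
    refine sum_nbij' (fun t => (t.2.1, t.1, t.2.2)) (fun t => (t.2.1, t.1, t.2.2))
      ?_ ?_ (fun _ _ => rfl) (fun _ _ => rfl) fun _ _ => by simp only [cubicTerm]; ring
    all_goals intro t; simp only [mem_zeroSumTriples]; grind
  have h₃ : ∑ t ∈ zeroSumTriples S, cubicTerm e t =
      ∑ t ∈ zeroSumTriples S, t.2.2 * e t.1 * e t.2.1 * e t.2.2 := by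
    refine sum_nbij' (fun t => (t.2.2, t.2.1, t.1)) (fun t => (t.2.2, t.2.1, t.1))
      ?_ ?_ (fun _ _ => rfl) (fun _ _ => rfl) fun _ _ => by simp only [cubicTerm]; ring
    all_goals intro t; simp only [mem_zeroSumTriples]; grind
  have hres : ∑ t ∈ zeroSumTriples S,
      ((t.1 + t.2.1 + t.2.2 : ℤ) : ℂ) * e t.1 * e t.2.1 * e t.2.2 = 0 :=
    sum_eq_zero fun t ht => by simp [(mem_zeroSumTriples.1 ht).2.2.2]
  have h3 : 3 * ∑ t ∈ zeroSumTriples S, cubicTerm e t = 0 :=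
    calc 3 * ∑ t ∈ zeroSumTriples S, cubicTerm e t
        = ∑ t ∈ zeroSumTriples S, cubicTerm e t +
            ∑ t ∈ zeroSumTriples S, t.2.1 * e t.1 * e t.2.1 * e t.2.2 +
            ∑ t ∈ zeroSumTriples S, t.2.2 * e t.1 * e t.2.1 * e t.2.2 := by
          rw [← h₂, ← h₃]; ring
      _ = ∑ t ∈ zeroSumTriples S,
            ((t.1 + t.2.1 + t.2.2 : ℤ) : ℂ) * e t.1 * e t.2.1 * e t.2.2 := by
          rw [← sum_add_distrib, ← sum_add_distrib]
          exact sum_congr rfl fun t _ => by simp only [cubicTerm]; push_cast; ring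
      _ = 0 := hres
  simpa using h3

theorem sum_cubicTerm_filter_ne (e : ℤ → ℂ) (ν : ℤ) :
    ∑ t ∈ (zeroSumTriples S).filter (·.1 ≠ ν), cubicTerm e t =
      -∑ t ∈ (zeroSumTriples S).filter (·.1 = ν), cubicTerm e t := by
  rw [eq_neg_iff_add_eq_zero, add_comm, sum_filter_add_sum_filter_not,
    sum_cubicTerm_zeroSumTriples]

theorem cubicTerm_neg {e : ℤ → ℂ} (he : ∀ m, e (-m) = conj (e m)) (t : ℤ × ℤ × ℤ) :
    cubicTerm e (-t.1, -t.2.1, -t.2.2) = -conj (cubicTerm e t) := by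
  simp only [cubicTerm, he, map_mul, map_intCast]
  push_cast
  ring

theorem im_sum_cubicTerm_filter_pos (hS : ∀ m ∈ S, -m ∈ S) (h0 : 0 ∉ S) {e : ℤ → ℂ}
    (he : ∀ m, e (-m) = conj (e m)) :
    (∑ t ∈ (zeroSumTriples S).filter (0 < ·.1), cubicTerm e t).im = 0 := by
  have hneg : ∑ t ∈ (zeroSumTriples S).filter (¬ 0 < ·.1), cubicTerm e t =
      -conj (∑ t ∈ (zeroSumTriples S).filter (0 < ·.1), cubicTerm e t) := by
    rw [map_sum, ← sum_neg_distrib]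
    refine sum_nbij' (fun t => (-t.1, -t.2.1, -t.2.2)) (fun t => (-t.1, -t.2.1, -t.2.2))
      ?_ ?_ (fun _ _ => by simp) (fun _ _ => by simp) fun t _ => by
        rw [← cubicTerm_neg he, neg_neg, neg_neg, neg_neg]
    all_goals intro t; simp only [mem_filter, mem_zeroSumTriples]; grind
  have hsplit := sum_filter_add_sum_filter_not (zeroSumTriples S) (0 < ·.1) (cubicTerm e)
  rw [sum_cubicTerm_zeroSumTriples, hneg, add_neg_eq_zero] at hsplit
  exact conj_eq_iff_im.1 hsplit.symm

def quarticTerm (e : ℤ → ℂ) (q : ℤ × ℤ × ℤ × ℤ) : ℂ :=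
  q.1 * e q.1 * e q.2.1 * e q.2.2.1 * e q.2.2.2

def quarticTermDeriv (e δ : ℤ → ℂ) (q : ℤ × ℤ × ℤ × ℤ) : ℂ :=
  q.1 * (δ q.1 * e q.2.1 * e q.2.2.1 * e q.2.2.2 + e q.1 * δ q.2.1 * e q.2.2.1 * e q.2.2.2 +
    e q.1 * e q.2.1 * δ q.2.2.1 * e q.2.2.2 + e q.1 * e q.2.1 * e q.2.2.1 * δ q.2.2.2)

theorem sum_quarticTermDeriv_quartets {ν : ℤ} (hν : ν ∈ S) (e : ℤ → ℂ) :
    ∑ q ∈ quartets S ν, quarticTermDeriv e (Pi.single ν 1) q =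
      3 * ∑ t ∈ (zeroSumTriples S).filter (·.1 ≠ ν), cubicTerm e t := by
  have expand : ∀ q ∈ quartets S ν, quarticTermDeriv e (Pi.single ν 1) q =
      ((if q.2.1 = ν then cubicTerm e (q.1, q.2.2.1, q.2.2.2) else 0) +
        if q.2.2.1 = ν then cubicTerm e (q.1, q.2.1, q.2.2.2) else 0) +
        if q.2.2.2 = ν then cubicTerm e (q.1, q.2.1, q.2.2.1) else 0 := by
    intro q hq
    simp only [quarticTermDeriv, cubicTerm, Pi.single_apply, if_neg (mem_quartets.1 hq).2.2.2.2.2]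
    split_ifs <;> ring
  have h₂ : ∑ q ∈ quartets S ν, (if q.2.1 = ν then cubicTerm e (q.1, q.2.2.1, q.2.2.2) else 0) =
      ∑ t ∈ (zeroSumTriples S).filter (·.1 ≠ ν), cubicTerm e t := by
    rw [← sum_filter]
    refine sum_nbij' (fun q => (q.1, q.2.2.1, q.2.2.2)) (fun t => (t.1, ν, t.2.1, t.2.2))
      ?_ ?_ ?_ (fun _ _ => rfl) (fun _ _ => rfl)
    all_goals intro; simp only [mem_filter, mem_quartets, mem_zeroSumTriples]; grind
  have h₃ : ∑ q ∈ quartets S ν, (if q.2.2.1 = ν then cubicTerm e (q.1, q.2.1, q.2.2.2) else 0) =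
      ∑ t ∈ (zeroSumTriples S).filter (·.1 ≠ ν), cubicTerm e t := by
    rw [← sum_filter]
    refine sum_nbij' (fun q => (q.1, q.2.1, q.2.2.2)) (fun t => (t.1, t.2.1, ν, t.2.2))
      ?_ ?_ ?_ (fun _ _ => rfl) (fun _ _ => rfl)
    all_goals intro; simp only [mem_filter, mem_quartets, mem_zeroSumTriples]; grind
  have h₄ : ∑ q ∈ quartets S ν, (if q.2.2.2 = ν then cubicTerm e (q.1, q.2.1, q.2.2.1) else 0) =
      ∑ t ∈ (zeroSumTriples S).filter (·.1 ≠ ν), cubicTerm e t := by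
    rw [← sum_filter]
    refine sum_nbij' (fun q => (q.1, q.2.1, q.2.2.1)) (fun t => (t.1, t.2.1, t.2.2, ν))
      ?_ ?_ ?_ (fun _ _ => rfl) (fun _ _ => rfl)
    all_goals intro; simp only [mem_filter, mem_quartets, mem_zeroSumTriples]; grind
  rw [sum_congr rfl expand, sum_add_distrib, sum_add_distrib, h₂, h₃, h₄]
  ring

end Resonance

theorem sum_fin_sum_filter_fst_eq_succ {β : Type*} [AddCommMonoid β] {N : ℕ}
    (s : Finset (ℤ × ℤ × ℤ)) (hs : ∀ t ∈ s, t.1 ≤ N) (f : ℤ × ℤ × ℤ → β) :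
    ∑ n : Fin N, ∑ t ∈ s.filter (fun t => t.1 = ((n : ℕ) : ℤ) + 1), f t =
      ∑ t ∈ s.filter (0 < ·.1), f t := by
  have hmaps : ∀ t ∈ s.filter (0 < ·.1), (t.1 - 1).toNat ∈ range N := fun t ht => by
    simp only [mem_filter, mem_range] at ht ⊢
    have := hs t ht.1
    omega
  rw [← sum_fiberwise_of_maps_to hmaps,
    Fin.sum_univ_eq_sum_range (fun k => ∑ t ∈ s.filter (fun t => t.1 = (k : ℤ) + 1), f t)]
  refine sum_congr rfl fun k _ => sum_congr ?_ fun _ _ => rfl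
  ext t
  simp only [mem_filter]
  exact ⟨fun ⟨h, _⟩ => ⟨⟨h, by omega⟩, by omega⟩, fun ⟨⟨h, _⟩, _⟩ => ⟨h, by omega⟩⟩

theorem extendConj_neg (N : ℕ) (c : Fin N → ℂ) (m : ℤ) :
    extendConj N c (-m) = conj (extendConj N c m) := by
  unfold extendConj
  simp only [neg_neg]
  split_ifs <;> first | omega | simp

theorem extendConj_update (N : ℕ) (c : Fin N → ℂ) (n : Fin N) (v : ℂ) (m : ℤ) :
    extendConj N (Function.update c n v) m =
      if m = n + 1 then v else if m = -(n + 1) then conj v else extendConj N c m := by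
  have hn := n.isLt
  unfold extendConj
  split_ifs <;> (try simp only [Function.update_apply, Fin.ext_iff]) <;> (try split_ifs) <;>
    first | omega | rfl

noncomputable def modes (N : ℕ) : Finset ℤ := (Icc (-(N : ℤ)) N).erase 0

theorem mem_modes {N : ℕ} {m : ℤ} : m ∈ modes N ↔ m ≠ 0 ∧ -(N : ℤ) ≤ m ∧ m ≤ N := by
  simp [modes]

section Gkdv

variable {N : ℕ} (c : Fin N → ℂ) (n : Fin N)

theorem gkdvF_eq : gkdvF N c n = -I * (((n : ℕ) + 1 : ℤ) : ℂ) ^ 3 * c n -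
    I * ∑ q ∈ quartets (modes N) ((n : ℕ) + 1), quarticTerm (extendConj N c) q :=
  rfl

theorem hasWirtingerDerivAt_extendConj_update (m : ℤ) :
    HasWirtingerDerivAt (fun v => extendConj N (Function.update c n v) m)
      ((Pi.single ((n : ℕ) + 1 : ℤ) 1 : ℤ → ℂ) m) (c n) := by
  simp only [extendConj_update, Pi.single_apply]
  split_ifs
  · exact hasWirtingerDerivAt_id _
  · exact hasWirtingerDerivAt_conj _
  · exact hasWirtingerDerivAt_const _ _

theorem hasWirtingerDerivAt_quarticTerm_update (q : ℤ × ℤ × ℤ × ℤ) :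
    HasWirtingerDerivAt (fun v => quarticTerm (extendConj N (Function.update c n v)) q)
      (quarticTermDeriv (extendConj N c) (Pi.single ((n : ℕ) + 1 : ℤ) 1) q) (c n) := by
  have h := hasWirtingerDerivAt_extendConj_update c n
  refine ((((h q.1).const_mul (q.1 : ℂ)).mul (h q.2.1)).mul (h q.2.2.1)).mul (h q.2.2.2)
    |>.congr_deriv ?_
  simp only [Function.update_eq_self, quarticTermDeriv]
  ring

theorem hasWirtingerDerivAt_gkdvF_update :
    HasWirtingerDerivAt (fun v => gkdvF N (Function.update c n v) n)
      (-I * (((n : ℕ) + 1 : ℤ) : ℂ) ^ 3 + 3 * I * ∑ t ∈ (zeroSumTriples (modes N)).filter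
        (fun t => t.1 = ((n : ℕ) : ℤ) + 1), cubicTerm (extendConj N c) t) (c n) := by
  have hν : ((n : ℕ) + 1 : ℤ) ∈ modes N := mem_modes.2 ⟨by omega, by omega, by omega⟩
  simp only [gkdvF_eq, Function.update_self]
  refine (((hasWirtingerDerivAt_id _).const_mul _).sub
    ((HasWirtingerDerivAt.sum fun q _ => hasWirtingerDerivAt_quarticTerm_update c n q).const_mul
      I)).congr_deriv ?_
  rw [sum_quarticTermDeriv_quartets hν, sum_cubicTerm_filter_ne]
  ring

theorem gkdvF_partial_divergence :
    deriv (fun s : ℝ =>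
        (gkdvF N (Function.update c n ((s : ℂ) + ((c n).im : ℂ) * I)) n).re) ((c n).re) +
      deriv (fun s : ℝ =>
        (gkdvF N (Function.update c n (((c n).re : ℂ) + (s : ℂ) * I)) n).im) ((c n).im) =
      -6 * (∑ t ∈ (zeroSumTriples (modes N)).filter (fun t => t.1 = ((n : ℕ) : ℤ) + 1),
        cubicTerm (extendConj N c) t).im := by
  refine (hasWirtingerDerivAt_gkdvF_update c n).deriv_re_add_deriv_im.trans ?_
  rw [← Int.cast_pow, add_re, neg_mul, neg_re, I_mul_re, intCast_im, mul_assoc, mul_re, I_mul_re,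
    I_mul_im]
  norm_num
  ring

end Gkdv

theorem gkdv_vector_field_divergence_free_general (N : ℕ) (c : Fin N → ℂ) :
    ∑ n : Fin N,
      (deriv (fun s : ℝ =>
          (gkdvF N (Function.update c n ((s : ℂ) + ((c n).im : ℂ) * Complex.I)) n).re)
          ((c n).re) +
       deriv (fun s : ℝ =>
          (gkdvF N (Function.update c n (((c n).re : ℂ) + (s : ℂ) * Complex.I)) n).im)
          ((c n).im)) = 0 := by
  have hbound : ∀ t ∈ zeroSumTriples (modes N), t.1 ≤ N := fun t ht =>
    (mem_modes.1 (mem_zeroSumTriples.1 ht).1).2.2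
  have hneg : ∀ m ∈ modes N, -m ∈ modes N := fun m hm => by
    rw [mem_modes] at hm ⊢; omega
  have hzero : 0 ∉ modes N := fun h => (mem_modes.1 h).1 rfl
  simp only [gkdvF_partial_divergence]
  rw [← mul_sum, ← im_sum, sum_fin_sum_filter_fst_eq_succ _ hbound,
    im_sum_cubicTerm_filter_pos hneg hzero (extendConj_neg N c), mul_zero]

/-- **The truncated gauge-transformed quartic gKdV vector field is divergence-free.**
Writing `c_n = a_n + i b_n`, at every point of `ℝ^{2N} ≅ ℂ^N` one has
`Σ_{n=1}^N ( ∂_{a_n} Re F_n + ∂_{b_n} Im F_n ) = 0`. -/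
theorem gkdv_vector_field_divergence_free (N : ℕ) (hN : 1 ≤ N) (c : Fin N → ℂ) :
    ∑ n : Fin N,
      (deriv (fun s : ℝ =>
          (gkdvF N (Function.update c n ((s : ℂ) + ((c n).im : ℂ) * Complex.I)) n).re)
          ((c n).re) +
       deriv (fun s : ℝ =>
          (gkdvF N (Function.update c n (((c n).re : ℂ) + (s : ℂ) * Complex.I)) n).im)
          ((c n).im)) = 0 :=
  gkdv_vector_field_divergence_free_general N c
end

section
/- Let n, n₁, n₂, n₃, n₄ be nonzero integers with n = n₁ + n₂ + n₃ + n₄. Suppose there exist distinct indices k ≠ j in {1,2,3,4} such that n_k ∈ {n, −n₁} and n_j ∈ {n, −n₁}, where in addition n_k = n is required if k = 1 and n_j = n is required if j = 1. Then |n³ − n₁³ − n₂³ − n₃³ − n₄³| ≥ (3/2) · max(|n|, |n₁|, |n₂|, |n₃|, |n₄|)². -/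
/-!
Put `m = (n, -n₁, -n₂, -n₃, -n₄)`: these five nonzero integers sum to `0`, and the resonance
function is `∑ mᵢ³`. Degeneracy means that two entries cancel, `m_q = -m_p`, while a third entry
`m_r` has the same size as them. The other three entries `m_r, m_s, m_t` then also sum to `0`, so
`∑ mᵢ³ = m_r³ + m_s³ + m_t³ = 3 m_r m_s m_t`, and every `mᵢ²` is one of `m_r², m_s², m_t²`.
For nonzero integers with `a + b + c = 0` one has `|c| ≤ |a| + |b| ≤ 2 |a| |b|`, hence
`c² ≤ 2 |a b c|`, which is the claimed bound.
-/

theorem sum_cubes_of_add_eq_zero {a b c : ℤ} (h : a + b + c = 0) :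
    a ^ 3 + b ^ 3 + c ^ 3 = 3 * (a * b * c) := by
  linear_combination (a ^ 2 + b ^ 2 + c ^ 2 - a * b - b * c - c * a) * h

theorem sq_le_two_mul_abs_mul_of_add_eq_zero {a b c : ℤ} (ha : a ≠ 0) (hb : b ≠ 0)
    (h : a + b + c = 0) : c ^ 2 ≤ 2 * |a * b * c| := by
  have hc : |c| ≤ |a| + |b| := by
    rw [show c = -(a + b) by linarith, abs_neg]
    exact abs_add_le a b
  have hab : |a| + |b| ≤ 2 * |a| * |b| := by
    nlinarith [Int.one_le_abs ha, Int.one_le_abs hb]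
  calc c ^ 2 = |c| * |c| := by rw [← sq_abs, sq]
    _ ≤ |c| * (2 * |a| * |b|) := mul_le_mul_of_nonneg_left (hc.trans hab) (abs_nonneg c)
    _ = 2 * |a * b * c| := by rw [abs_mul, abs_mul]; ring

theorem three_mul_sq_le_two_mul_abs_sum_cubes {a b c x : ℤ} (ha : a ≠ 0) (hb : b ≠ 0)
    (hc : c ≠ 0) (h : a + b + c = 0) (hx : x = a ∨ x = b ∨ x = c) :
    3 * x ^ 2 ≤ 2 * |a ^ 3 + b ^ 3 + c ^ 3| := by
  suffices x ^ 2 ≤ 2 * |a * b * c| by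
    rw [sum_cubes_of_add_eq_zero h, abs_mul (3 : ℤ), abs_of_pos three_pos]
    linarith
  rcases hx with rfl | rfl | rfl
  · simpa only [mul_comm, mul_left_comm] using
      sq_le_two_mul_abs_mul_of_add_eq_zero hb hc (by linarith : b + c + x = 0)
  · simpa only [mul_comm, mul_left_comm] using
      sq_le_two_mul_abs_mul_of_add_eq_zero ha hc (by linarith : a + c + x = 0)
  · exact sq_le_two_mul_abs_mul_of_add_eq_zero ha hb h

theorem Multiset.three_mul_sq_le_of_cancelling_pair {S : Multiset ℤ} (hcard : S.card = 5)
    (h0 : (0 : ℤ) ∉ S) (hsum : S.sum = 0) {a b : ℤ} (hle : {a, -a, b} ≤ S) (hb : |b| = |a|) :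
    ∀ x ∈ S, 3 * x ^ 2 ≤ 2 * |(S.map (· ^ 3)).sum| := by
  obtain ⟨T, rfl⟩ := Multiset.le_iff_exists_add.1 hle
  obtain ⟨c, d, rfl⟩ : ∃ c d, T = {c, d} := Multiset.card_eq_two.1 (by simpa using hcard)
  simp only [Multiset.insert_eq_cons, Multiset.cons_add, Multiset.singleton_add,
    Multiset.mem_cons, Multiset.mem_singleton, not_or, Multiset.sum_cons,
    Multiset.sum_singleton, Multiset.map_cons, Multiset.map_singleton] at h0 hsum ⊢
  have hbcd : b + c + d = 0 := by linarith
  have hcubes : a ^ 3 + ((-a) ^ 3 + (b ^ 3 + (c ^ 3 + d ^ 3))) = b ^ 3 + c ^ 3 + d ^ 3 := by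
    ring
  rw [hcubes]
  obtain ⟨-, -, hb0, hc0, hd0⟩ := h0
  have hsq : a ^ 2 = b ^ 2 := by rw [← sq_abs a, ← sq_abs b, hb]
  intro x hx
  obtain ⟨y, hy, hxy⟩ : ∃ y, (y = b ∨ y = c ∨ y = d) ∧ x ^ 2 = y ^ 2 := by
    rcases hx with rfl | rfl | rfl | rfl | rfl
    exacts [⟨b, .inl rfl, hsq⟩, ⟨b, .inl rfl, by rw [neg_sq, hsq]⟩, ⟨_, .inl rfl, rfl⟩,
      ⟨_, .inr (.inl rfl), rfl⟩, ⟨_, .inr (.inr rfl), rfl⟩]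
  rw [hxy]
  exact three_mul_sq_le_two_mul_abs_sum_cubes (Ne.symm hb0) (Ne.symm hc0) (Ne.symm hd0) hbcd hy

theorem Finset.insert_insert_singleton_le_univ_val_map {ι α : Type*} [Fintype ι] (f : ι → α)
    {p q r : ι} (hpq : p ≠ q) (hpr : p ≠ r) (hqr : q ≠ r) :
    {f p, f q, f r} ≤ Finset.univ.val.map f := by
  have hle : ({p, q, r} : Multiset ι) ≤ Finset.univ.val :=
    (Multiset.le_iff_subset (by simp [hpq, hpr, hqr])).2 fun i _ => Finset.mem_univ_val i
  simpa using Multiset.map_le_map (f := f) hle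

def signedFrequencies (n : ℤ) (v : Fin 4 → ℤ) : Fin 5 → ℤ :=
  Fin.cons n (-v)

theorem exists_cancelling_pair {n : ℤ} {v : Fin 4 → ℤ} (hv : ∀ i, v i ≠ 0)
    (hsum : n = ∑ i, v i) {k j : Fin 4} (hkj : k ≠ j)
    (hk : v k = n ∨ v k = -v 0) (hj : v j = n ∨ v j = -v 0)
    (hk0 : k = 0 → v k = n) (hj0 : j = 0 → v j = n) :
    ∃ p q r : Fin 5, p ≠ q ∧ p ≠ r ∧ q ≠ r ∧
      signedFrequencies n v q = -signedFrequencies n v p ∧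
      |signedFrequencies n v r| = |signedFrequencies n v p| := by
  have ne_zero_of_neg : ∀ {i}, v i = -v 0 → i ≠ 0 := by
    rintro i hi rfl
    exact hv 0 (by linarith)
  wlog hkn : v k = n generalizing k j
  · rcases hj with hjn | hj
    · exact this hkj.symm (.inl hjn) hk hj0 hk0 hjn
    have hk' := ne_zero_of_neg (hk.resolve_left hkn)
    refine ⟨1, k.succ, j.succ, ?_, ?_, (Fin.succ_injective _).ne hkj, ?_, ?_⟩
    · exact (Fin.succ_injective 4).ne hk'.symm
    · exact (Fin.succ_injective 4).ne (ne_zero_of_neg hj).symm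
    · simp [signedFrequencies, hk.resolve_left hkn]
    · simp [signedFrequencies, hj]
  rcases hj with hjn | hj
  · refine ⟨0, k.succ, j.succ, (Fin.succ_ne_zero _).symm, (Fin.succ_ne_zero _).symm,
      (Fin.succ_injective _).ne hkj, ?_, ?_⟩ <;> simp [signedFrequencies, hkn, hjn]
  have hj' := ne_zero_of_neg hj
  -- if neither `k` nor `j` is `0`, the two cancellations leave a fourth frequency `0`
  obtain rfl : k = 0 := by
    by_contra hk'
    have := hv 0; have := hv 1; have := hv 2; have := hv 3
    rw [Fin.sum_univ_four] at hsum
    fin_cases k <;> fin_cases j <;> simp at hkn hj hkj hk' hj' <;> omega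
  refine ⟨0, 1, j.succ, by decide, (Fin.succ_ne_zero _).symm,
    (Fin.succ_injective 4).ne hj'.symm, ?_, ?_⟩ <;> simp [signedFrequencies, hkn, hj]

theorem three_halves_mul_sq_max_le {a₀ a₁ a₂ a₃ a₄ R : ℤ} (h₀ : 3 * a₀ ^ 2 ≤ 2 * R)
    (h₁ : 3 * a₁ ^ 2 ≤ 2 * R) (h₂ : 3 * a₂ ^ 2 ≤ 2 * R) (h₃ : 3 * a₃ ^ 2 ≤ 2 * R)
    (h₄ : 3 * a₄ ^ 2 ≤ 2 * R) :
    (3 / 2 : ℝ) * ((max |a₀| (max |a₁| (max |a₂| (max |a₃| |a₄|))) : ℤ) : ℝ) ^ 2 ≤ (R : ℝ) := by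
  let P : ℤ → Prop := fun y => 3 * y ^ 2 ≤ 2 * R
  have hP : ∀ {a : ℤ}, 3 * a ^ 2 ≤ 2 * R → P |a| := fun h => by simpa only [P, sq_abs] using h
  have hM : P (max |a₀| (max |a₁| (max |a₂| (max |a₃| |a₄|)))) :=
    max_rec' P (hP h₀) (max_rec' P (hP h₁) (max_rec' P (hP h₂) (max_rec' P (hP h₃) (hP h₄))))
  have hM' : (3 : ℝ) * ((max |a₀| (max |a₁| (max |a₂| (max |a₃| |a₄|))) : ℤ) : ℝ) ^ 2
      ≤ 2 * (R : ℝ) := by exact_mod_cast hM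
  linarith

/-- **Degenerate frequency quadruples are non-resonant.**
Let `n, n₁, n₂, n₃, n₄` be nonzero integers with `n = n₁ + n₂ + n₃ + n₄`.  Suppose there are
distinct indices `k ≠ j` in `{1,2,3,4}` with `n_k ∈ {n, -n₁}` and `n_j ∈ {n, -n₁}` (where
`n_k = n` is required if `k = 1`, and `n_j = n` is required if `j = 1`).  Then
`|n³ - n₁³ - n₂³ - n₃³ - n₄³| ≥ (3/2) · max(|n|,|n₁|,|n₂|,|n₃|,|n₄|)²`. -/
theorem zeta_two_nonresonant (n n₁ n₂ n₃ n₄ : ℤ)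
    (hn : n ≠ 0) (h1 : n₁ ≠ 0) (h2 : n₂ ≠ 0) (h3 : n₃ ≠ 0) (h4 : n₄ ≠ 0)
    (hsum : n = n₁ + n₂ + n₃ + n₄)
    (hdeg : ∃ k j : Fin 4, k ≠ j ∧
      (![n₁, n₂, n₃, n₄] k = n ∨ ![n₁, n₂, n₃, n₄] k = -n₁) ∧
      (![n₁, n₂, n₃, n₄] j = n ∨ ![n₁, n₂, n₃, n₄] j = -n₁) ∧
      (k = 0 → ![n₁, n₂, n₃, n₄] k = n) ∧
      (j = 0 → ![n₁, n₂, n₃, n₄] j = n)) :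
    (3 / 2 : ℝ) * ((max |n| (max |n₁| (max |n₂| (max |n₃| |n₄|))) : ℤ) : ℝ) ^ 2 ≤
      ((|n ^ 3 - n₁ ^ 3 - n₂ ^ 3 - n₃ ^ 3 - n₄ ^ 3| : ℤ) : ℝ) := by
  obtain ⟨k, j, hkj, hk, hj, hk0, hj0⟩ := hdeg
  have hv : ∀ i, ![n₁, n₂, n₃, n₄] i ≠ 0 := by simp [Fin.forall_fin_succ, *]
  obtain ⟨p, q, r, hpq, hpr, hqr, hq, hr⟩ :=
    exists_cancelling_pair hv (by simp [Fin.sum_univ_four, hsum]) hkj hk hj hk0 hj0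
  have hS : Finset.univ.val.map (signedFrequencies n ![n₁, n₂, n₃, n₄]) =
      {n, -n₁, -n₂, -n₃, -n₄} := by
    rw [Fin.univ_val_map]
    rfl
  have hsumS : ({n, -n₁, -n₂, -n₃, -n₄} : Multiset ℤ).sum = 0 := by
    simp only [Multiset.insert_eq_cons, Multiset.sum_cons, Multiset.sum_singleton]
    linarith
  have hle := Finset.insert_insert_singleton_le_univ_val_map
    (signedFrequencies n ![n₁, n₂, n₃, n₄]) hpq hpr hqr
  rw [hq, hS] at hle
  have key := Multiset.three_mul_sq_le_of_cancelling_pair rfl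
    (by simp [hn.symm, h1, h2, h3, h4]) hsumS hle hr
  have hcubes : (({n, -n₁, -n₂, -n₃, -n₄} : Multiset ℤ).map (· ^ 3)).sum =
      n ^ 3 - n₁ ^ 3 - n₂ ^ 3 - n₃ ^ 3 - n₄ ^ 3 := by
    simp only [Multiset.insert_eq_cons, Multiset.map_cons, Multiset.map_singleton,
      Multiset.sum_cons, Multiset.sum_singleton]
    ring
  rw [hcubes] at key
  exact three_halves_mul_sq_max_le (key n (by simp)) (by simpa using key (-n₁) (by simp))
    (by simpa using key (-n₂) (by simp)) (by simpa using key (-n₃) (by simp))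
    (by simpa using key (-n₄) (by simp))
end

section
/- Let n, n₁, n₂, n₃, n₄ be nonzero integers with n = n₁ + n₂ + n₃ + n₄ and n₂ = −n₃, and assume max(|n|, |n₁|, |n₄|) = max(|n|, |n₁|, |n₂|, |n₃|, |n₄|). Then n³ − n₁³ − n₂³ − n₃³ − n₄³ = 3 n n₁ n₄, and consequently |n³ − n₁³ − n₂³ − n₃³ − n₄³| ≥ (3/2) · max(|n|, |n₁|, |n₂|, |n₃|, |n₄|)². -/
/-!
Since `n₂ = -n₃`, the relation `n = n₁ + n₄` turns the resonance function into the classical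
factorisation `(b + c)³ - b³ - c³ = 3 (b + c) b c`. For nonzero integers `a + b + c = 0`, each of
`|a|, |b|, |c|` is at most the sum of the other two, hence at most twice their product; multiplying
by the largest of them bounds its square by `2 |a b c|`.
-/

namespace Int

theorem abs_le_two_mul_abs_mul_abs_of_add_add_eq_zero {a b c : ℤ} (hb : b ≠ 0) (hc : c ≠ 0)
    (h : a + b + c = 0) : |a| ≤ 2 * (|b| * |c|) :=
  calc |a| = |b + c| := by rw [show a = -(b + c) by linarith, abs_neg]
    _ ≤ |b| + |c| := abs_add_le b c
    _ ≤ |b| * |c| + |b| * |c| :=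
      add_le_add (le_mul_of_one_le_right (abs_nonneg b) (one_le_abs hc))
        (le_mul_of_one_le_left (abs_nonneg c) (one_le_abs hb))
    _ = 2 * (|b| * |c|) := by ring

theorem sq_abs_le_two_mul_abs_mul_of_add_add_eq_zero {a b c : ℤ} (hb : b ≠ 0) (hc : c ≠ 0)
    (h : a + b + c = 0) : |a| ^ 2 ≤ 2 * |a * b * c| := by
  rw [sq, abs_mul, abs_mul, mul_assoc, mul_left_comm]
  exact mul_le_mul_of_nonneg_left (abs_le_two_mul_abs_mul_abs_of_add_add_eq_zero hb hc h)
    (abs_nonneg a)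

theorem sq_max_abs_le_two_mul_abs_mul_of_add_add_eq_zero {a b c : ℤ} (ha : a ≠ 0) (hb : b ≠ 0)
    (hc : c ≠ 0) (h : a + b + c = 0) : max |a| (max |b| |c|) ^ 2 ≤ 2 * |a * b * c| := by
  rcases max_choice |b| |c| with hbc | hbc <;>
    rcases max_choice |a| (max |b| |c|) with hM | hM <;> rw [hM] <;> try rw [hbc]
  · exact sq_abs_le_two_mul_abs_mul_of_add_add_eq_zero hb hc h
  · have := sq_abs_le_two_mul_abs_mul_of_add_add_eq_zero ha hc (by linarith : b + a + c = 0)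
    rwa [mul_comm b a] at this
  · exact sq_abs_le_two_mul_abs_mul_of_add_add_eq_zero hb hc h
  · have := sq_abs_le_two_mul_abs_mul_of_add_add_eq_zero ha hb (by linarith : c + a + b = 0)
    rwa [show c * a * b = a * b * c by ring] at this

end Int

theorem cancelling_pair_nonresonant_general (n n₁ n₂ n₃ n₄ : ℤ)
    (hn : n ≠ 0) (h1 : n₁ ≠ 0) (h4 : n₄ ≠ 0)
    (hsum : n = n₁ + n₂ + n₃ + n₄) (h23 : n₂ = -n₃)
    (hmax : max |n| (max |n₁| |n₄|) = max |n| (max |n₁| (max |n₂| (max |n₃| |n₄|)))) :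
    n ^ 3 - n₁ ^ 3 - n₂ ^ 3 - n₃ ^ 3 - n₄ ^ 3 = 3 * n * n₁ * n₄ ∧
    (3 / 2 : ℝ) * ((max |n| (max |n₁| (max |n₂| (max |n₃| |n₄|))) : ℤ) : ℝ) ^ 2 ≤
      ((|n ^ 3 - n₁ ^ 3 - n₂ ^ 3 - n₃ ^ 3 - n₄ ^ 3| : ℤ) : ℝ) := by
  have hres : n ^ 3 - n₁ ^ 3 - n₂ ^ 3 - n₃ ^ 3 - n₄ ^ 3 = 3 * n * n₁ * n₄ := by
    rw [hsum, h23]; ring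
  refine ⟨hres, ?_⟩
  have hbound := Int.sq_max_abs_le_two_mul_abs_mul_of_add_add_eq_zero hn (neg_ne_zero.2 h1)
    (neg_ne_zero.2 h4) (by rw [hsum, h23]; ring : n + -n₁ + -n₄ = 0)
  simp only [abs_neg, mul_neg, neg_mul, neg_neg] at hbound
  have hint : 3 * max |n| (max |n₁| |n₄|) ^ 2 ≤ 2 * |3 * n * n₁ * n₄| := by
    rw [show 3 * n * n₁ * n₄ = 3 * (n * n₁ * n₄) by ring, abs_mul, abs_of_pos (three_pos : (0 : ℤ) < 3)]
    linarith
  rw [← hmax, hres]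
  have hreal := (Int.cast_le (R := ℝ)).2 hint
  push_cast at hreal ⊢
  linarith

/-- **Cancelling pairs are non-resonant.**
Let `n, n₁, n₂, n₃, n₄` be nonzero integers with `n = n₁ + n₂ + n₃ + n₄` and `n₂ = -n₃`,
and assume `max(|n|,|n₁|,|n₄|)` equals the overall maximum `max(|n|,|n₁|,|n₂|,|n₃|,|n₄|)`.
Then `n³ - n₁³ - n₂³ - n₃³ - n₄³ = 3 n n₁ n₄` and consequently
`|n³ - n₁³ - n₂³ - n₃³ - n₄³| ≥ (3/2) · max(|n|,|n₁|,|n₂|,|n₃|,|n₄|)²`. -/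
theorem cancelling_pair_nonresonant (n n₁ n₂ n₃ n₄ : ℤ)
    (hn : n ≠ 0) (h1 : n₁ ≠ 0) (h2 : n₂ ≠ 0) (h3 : n₃ ≠ 0) (h4 : n₄ ≠ 0)
    (hsum : n = n₁ + n₂ + n₃ + n₄) (h23 : n₂ = -n₃)
    (hmax : max |n| (max |n₁| |n₄|) = max |n| (max |n₁| (max |n₂| (max |n₃| |n₄|)))) :
    n ^ 3 - n₁ ^ 3 - n₂ ^ 3 - n₃ ^ 3 - n₄ ^ 3 = 3 * n * n₁ * n₄ ∧
    (3 / 2 : ℝ) * ((max |n| (max |n₁| (max |n₂| (max |n₃| |n₄|))) : ℤ) : ℝ) ^ 2 ≤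
      ((|n ^ 3 - n₁ ^ 3 - n₂ ^ 3 - n₃ ^ 3 - n₄ ^ 3| : ℤ) : ℝ) :=
  cancelling_pair_nonresonant_general n n₁ n₂ n₃ n₄ hn h1 h4 hsum h23 hmax
end

section
/- Let u : ℝ × ℝ → ℝ be a C^∞ function, 2π-periodic in its first argument, solving the quartic generalized KdV equation ∂_t u + ∂_x³ u = u³ ∂_x u for all (x,t). Define a(t) := ∫₀^t (1/2π) ∫₀^{2π} u(y,s)³ dy ds and v(x,t) := u(x − a(t), t). Then v is C^∞ and 2π-periodic in x, v(x,0) = u(x,0) for all x, and v solves the gauge-transformed equation ∂_t v + ∂_x³ v = ( v³ − (1/2π) ∫₀^{2π} v(y,t)³ dy ) · ∂_x v for all (x,t). -/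
/-!
In the moving frame `x ↦ x - a t` with `a' = c`, the chain rule gives
`∂ₜ v = (∂ₜ u - c ∂ₓ u)(x - a t, t)`, while spatial derivatives just get translated.
Choosing `c t` to be the spatial mean of `u³` subtracts exactly that mean from the
nonlinearity, and by periodicity the mean of `u³` over a period equals the mean of `v³`.
The only analytic input is that `c`, a parametric integral of a smooth integrand,
is smooth, so that `a` and hence `v` are smooth.
-/

open MeasureTheory Function intervalIntegral
open scoped ContDiff

section PartialDerivatives

variable {F : ℝ → ℝ → ℝ}

theorem hasDerivAt_uncurry_comp {φ ψ : ℝ → ℝ} {φ' ψ' t : ℝ}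
    (hF : DifferentiableAt ℝ (uncurry F) (φ t, ψ t)) (hφ : HasDerivAt φ φ' t)
    (hψ : HasDerivAt ψ ψ' t) :
    HasDerivAt (fun s => F (φ s) (ψ s)) (fderiv ℝ (uncurry F) (φ t, ψ t) (φ', ψ')) t :=
  hF.hasFDerivAt.comp_hasDerivAt (l := uncurry F) t (hφ.prodMk hψ)

theorem hasDerivAt_uncurry_left {x t : ℝ} (hF : DifferentiableAt ℝ (uncurry F) (x, t)) :
    HasDerivAt (fun y => F y t) (fderiv ℝ (uncurry F) (x, t) (1, 0)) x :=
  hasDerivAt_uncurry_comp hF (hasDerivAt_id' x) (hasDerivAt_const x t)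

theorem hasDerivAt_uncurry_right {x t : ℝ} (hF : DifferentiableAt ℝ (uncurry F) (x, t)) :
    HasDerivAt (F x) (fderiv ℝ (uncurry F) (x, t) (0, 1)) t :=
  hasDerivAt_uncurry_comp hF (hasDerivAt_const t x) (hasDerivAt_id' t)

theorem hasDerivAt_comp_moving_frame {a : ℝ → ℝ} {c x t : ℝ}
    (hF : DifferentiableAt ℝ (uncurry F) (x - a t, t)) (ha : HasDerivAt a c t) :
    HasDerivAt (fun s => F (x - a s) s)
      (deriv (F (x - a t)) t - c * deriv (fun y => F y t) (x - a t)) t := by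
  refine (hasDerivAt_uncurry_comp hF (ha.const_sub x) (hasDerivAt_id' t)).congr_deriv ?_
  have hdir : (-c, (1 : ℝ)) = (-c) • ((1 : ℝ), (0 : ℝ)) + ((0 : ℝ), (1 : ℝ)) := by simp
  rw [(hasDerivAt_uncurry_left hF).deriv, (hasDerivAt_uncurry_right hF).deriv, hdir, map_add,
    map_smul, smul_eq_mul]
  ring

end PartialDerivatives

section ParametricIntegral

variable {F : ℝ → ℝ → ℝ}

theorem hasDerivAt_parametric_intervalIntegral (hF : ContDiff ℝ 1 (uncurry F)) (a b x₀ : ℝ) :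
    HasDerivAt (fun x => ∫ y in a..b, F y x)
      (∫ y in a..b, fderiv ℝ (uncurry F) (y, x₀) (0, 1)) x₀ := by
  have hD : Continuous fun p => fderiv ℝ (uncurry F) p (0, 1) :=
    (hF.continuous_fderiv one_ne_zero).clm_apply continuous_const
  obtain ⟨C, hC⟩ := (isCompact_uIcc.prod (isCompact_closedBall x₀ 1)).exists_bound_of_continuousOn
    hD.continuousOn
  have hFx : ∀ x, Continuous fun y => F y x := fun x =>
    hF.continuous.comp (continuous_id.prodMk continuous_const)
  exact (hasDerivAt_integral_of_dominated_loc_of_deriv_le (Metric.ball_mem_nhds x₀ one_pos)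
    (.of_forall fun x => (hFx x).aestronglyMeasurable) ((hFx x₀).intervalIntegrable a b)
    (hD.comp (continuous_id.prodMk continuous_const)).aestronglyMeasurable
    (.of_forall fun y hy x hx =>
      hC (y, x) ⟨Set.uIoc_subset_uIcc hy, Metric.ball_subset_closedBall hx⟩)
    intervalIntegrable_const
    (.of_forall fun y _ x _ =>
      hasDerivAt_uncurry_right (hF.differentiable one_ne_zero (y, x)))).2

theorem contDiff_parametric_intervalIntegral {n : ℕ∞} (hF : ContDiff ℝ n (uncurry F))
    (a b : ℝ) : ContDiff ℝ n fun x => ∫ y in a..b, F y x := by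
  have hnat : ∀ {F : ℝ → ℝ → ℝ} (m : ℕ), ContDiff ℝ m (uncurry F) →
      ContDiff ℝ m fun x => ∫ y in a..b, F y x := by
    intro F m hF
    induction m generalizing F with
    | zero =>
      rw [Nat.cast_zero, contDiff_zero] at hF ⊢
      exact continuous_parametric_intervalIntegral_of_continuous' (f := fun x y => F y x)
        (hF.comp continuous_swap) a b
    | succ m ih =>
      have hF1 : ContDiff ℝ 1 (uncurry F) := hF.of_le (by exact_mod_cast Nat.le_add_left 1 m)
      have hderiv : deriv (fun x => ∫ y in a..b, F y x) =
          fun x => ∫ y in a..b, fderiv ℝ (uncurry F) (y, x) (0, 1) :=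
        funext fun x => (hasDerivAt_parametric_intervalIntegral hF1 a b x).deriv
      rw [Nat.cast_succ, contDiff_succ_iff_deriv, hderiv]
      exact ⟨fun x => (hasDerivAt_parametric_intervalIntegral hF1 a b x).differentiableAt,
        by simp, ih ((hF.fderiv_right le_rfl).clm_apply contDiff_const)⟩
  induction n with
  | top => exact contDiff_infty.2 fun m => hnat m (hF.of_le (by exact_mod_cast le_top))
  | coe m => exact hnat m hF

end ParametricIntegral

theorem contDiff_infty_primitive {c : ℝ → ℝ} (hc : ContDiff ℝ ∞ c) (a : ℝ) :
    ContDiff ℝ ∞ fun t => ∫ s in a..t, c s := by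
  refine contDiff_infty_iff_deriv.2
    ⟨fun t => (hc.continuous.integral_hasStrictDerivAt a t).hasDerivAt.differentiableAt, ?_⟩
  rwa [funext (Continuous.deriv_integral c hc.continuous a)]

theorem Function.Periodic.intervalIntegral_comp_sub_eq {E : Type*} [NormedAddCommGroup E]
    [NormedSpace ℝ E] {f : ℝ → E} {T : ℝ} (hf : Periodic f T) (b : ℝ) : ∫ y in 0..T, f (y - b) = ∫ y in 0..T, f y := by
  simpa [integral_comp_sub_right, sub_eq_neg_add] using hf.intervalIntegral_add_eq (-b) 0

/-- **The gauge transformation for the periodic quartic gKdV.**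
Let `u : ℝ × ℝ → ℝ` be `C^∞`, `2π`-periodic in its first argument, solving
`∂ₜ u + ∂ₓ³ u = u³ ∂ₓ u`.  Let `a t = ∫₀ᵗ (1/2π) ∫₀^{2π} u(y,s)³ dy ds` and
`v x t = u (x - a t) t`.  Then `v` is `C^∞`, `2π`-periodic in `x`, has the same initial
data, and solves `∂ₜ v + ∂ₓ³ v = (v³ - (1/2π)∫₀^{2π} v³ dy) ∂ₓ v`. -/
theorem gauge_transformation_gkdv (u : ℝ → ℝ → ℝ)
    (hsmooth : ContDiff ℝ (⊤ : ℕ∞) (Function.uncurry u))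
    (hper : ∀ x t : ℝ, u (x + 2 * Real.pi) t = u x t)
    (hPDE : ∀ x t : ℝ,
      deriv (fun s => u x s) t + iteratedDeriv 3 (fun y => u y t) x =
        u x t ^ 3 * deriv (fun y => u y t) x)
    (v : ℝ → ℝ → ℝ)
    (hv : ∀ x t : ℝ, v x t =
      u (x - ∫ s in (0:ℝ)..t, (1 / (2 * Real.pi)) * ∫ y in (0:ℝ)..(2 * Real.pi), u y s ^ 3) t) :
    ContDiff ℝ (⊤ : ℕ∞) (Function.uncurry v) ∧
    (∀ x t : ℝ, v (x + 2 * Real.pi) t = v x t) ∧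
    (∀ x : ℝ, v x 0 = u x 0) ∧
    (∀ x t : ℝ,
      deriv (fun s => v x s) t + iteratedDeriv 3 (fun y => v y t) x =
        (v x t ^ 3 - (1 / (2 * Real.pi)) * ∫ y in (0:ℝ)..(2 * Real.pi), v y t ^ 3) *
          deriv (fun y => v y t) x) := by
  set c : ℝ → ℝ := fun s => (1 / (2 * Real.pi)) * ∫ y in (0:ℝ)..(2 * Real.pi), u y s ^ 3
  set a : ℝ → ℝ := fun t => ∫ s in (0:ℝ)..t, c s
  have hvu : ∀ x t, v x t = u (x - a t) t := hv
  have hc : ContDiff ℝ ∞ c := contDiff_const.mul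
    (contDiff_parametric_intervalIntegral (F := fun y s => u y s ^ 3) (hsmooth.pow 3) _ _)
  have ha : ∀ t, HasDerivAt a (c t) t := fun t =>
    (hc.continuous.integral_hasStrictDerivAt 0 t).hasDerivAt
  have hmean : ∀ t, ∫ y in (0:ℝ)..(2 * Real.pi), v y t ^ 3 =
      ∫ y in (0:ℝ)..(2 * Real.pi), u y t ^ 3 := fun t => by
    simp only [hvu]
    exact Periodic.intervalIntegral_comp_sub_eq (f := fun y => u y t ^ 3)
      (fun y => by simp only [hper]) (a t)
  refine ⟨?_, fun x t => ?_, fun x => ?_, fun x t => ?_⟩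
  · have : uncurry v = uncurry u ∘ fun p => (p.1 - a p.2, p.2) := funext fun p => hvu p.1 p.2
    rw [this]
    exact hsmooth.comp
      ((contDiff_fst.sub ((contDiff_infty_primitive hc 0).comp contDiff_snd)).prodMk contDiff_snd)
  · rw [hvu, hvu, add_sub_right_comm, hper]
  · rw [hvu, show a 0 = 0 from integral_same, sub_zero]
  · have hvx : (fun y => v y t) = fun y => u (y - a t) t := funext fun y => hvu y t
    have hvt : (fun s => v x s) = fun s => u (x - a s) s := funext fun s => hvu x s
    rw [hvt, (hasDerivAt_comp_moving_frame (hsmooth.differentiable (by simp) _) (ha t)).deriv,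
      hvx, iteratedDeriv_comp_sub_const (f := fun y => u y t),
      deriv_comp_sub_const (f := fun y => u y t), hmean, hvu]
    linear_combination hPDE (x - a t) t
end
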